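/- Let r ≥ 1 and let z = (z₀⁽¹⁾, z₁⁽¹⁾, z₀⁽²⁾, z₀⁽³⁾) ∈ Mat(2r × 4r, ℂ) be written in blocks in Mat(2r × r, ℂ), and assume det(z₀⁽¹⁾ | z₁⁽¹⁾) ≠ 0, det(z₀⁽¹⁾ | z₀⁽²⁾) ≠ 0, det(z₀⁽¹⁾ | z₀⁽³⁾) ≠ 0 and det(z₀⁽²⁾ | z₀⁽³⁾) ≠ 0. Then there exist g ∈ GL(2r, ℂ), h ∈ H_{(2,1,1)}, and x' ∈ GL(r, ℂ) such that g · z · h is the 2r×4r matrix with block rows (1_r, 0, 0, 1_r) and (0, 1_r, 1_r, −x'). -/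

import Mathlib

/-!
Multiplying on the left by the inverse of `(z₀⁽¹⁾ | z₀⁽²⁾)` turns these two block columns into
`(1; 0)` and `(0; 1)`, and the other two into some `(a; b)` and `(c; d)`. The three remaining
determinant conditions then say that `b`, `d` and `c` are invertible. Now `g = diag(1, b⁻¹)`
together with `h₀ = 1`, `h₁ = -a`, `k = b`, `l = c⁻¹` gives the normal form with
`x' = -b⁻¹ d c⁻¹`.
-/

open Matrix

/-- The `2r × nr` matrix assembled from `n` block columns of size `2r × r`. -/
def ofBlockCols (r n : ℕ) (z : Fin n → Matrix (Fin r ⊕ Fin r) (Fin r) ℂ) :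
    Matrix (Fin r ⊕ Fin r) (Fin n × Fin r) ℂ :=
  Matrix.of fun i jk => z jk.1 i jk.2

/-- The `nr × nr` matrix assembled from an `n × n` array of `r × r` blocks. -/
def ofBlockMat (r n : ℕ) (H : Fin n → Fin n → Matrix (Fin r) (Fin r) ℂ) :
    Matrix (Fin n × Fin r) (Fin n × Fin r) ℂ :=
  Matrix.of fun jk lk => H jk.1 lk.1 jk.2 lk.2

section BlockColumns

variable {r n : ℕ}

lemma mul_ofBlockCols (M : Matrix (Fin r ⊕ Fin r) (Fin r ⊕ Fin r) ℂ)
    (z : Fin n → Matrix (Fin r ⊕ Fin r) (Fin r) ℂ) :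
    M * ofBlockCols r n z = ofBlockCols r n fun j => M * z j := by
  ext i jk
  simp [ofBlockCols, mul_apply]

lemma ofBlockCols_mul_ofBlockMat (z : Fin n → Matrix (Fin r ⊕ Fin r) (Fin r) ℂ)
    (H : Fin n → Fin n → Matrix (Fin r) (Fin r) ℂ) :
    ofBlockCols r n z * ofBlockMat r n H = ofBlockCols r n fun l => ∑ j, z j * H j l := by
  ext i lk
  simp only [ofBlockCols, ofBlockMat, mul_apply, of_apply, Matrix.sum_apply]
  rw [Fintype.sum_prod_type]

lemma ofBlockCols_mul_ofBlockMat_211 (z : Fin 4 → Matrix (Fin r ⊕ Fin r) (Fin r) ℂ)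
    (h₀ h₁ k l : Matrix (Fin r) (Fin r) ℂ) :
    ofBlockCols r 4 z * ofBlockMat r 4 ![![h₀, h₁, 0, 0], ![0, h₀, 0, 0], ![0, 0, k, 0],
        ![0, 0, 0, l]] =
      ofBlockCols r 4 ![z 0 * h₀, z 0 * h₁ + z 1 * h₀, z 2 * k, z 3 * l] := by
  rw [ofBlockCols_mul_ofBlockMat]
  congr 1
  ext1 j
  fin_cases j <;> simp [Fin.sum_univ_four]

end BlockColumns

section Blocks

variable {R m n : Type*}

lemma fromRows_add_fromRows {k : Type*} [Add R] (a c : Matrix m k R) (b d : Matrix n k R) :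
    fromRows a b + fromRows c d = fromRows (a + c) (b + d) := by
  ext (i | i) j <;> rfl

variable [CommRing R] [Fintype m] [Fintype n] [DecidableEq m] [DecidableEq n]

lemma mul_eq_fromRows_of_mul_fromCols_eq_one {M : Matrix (m ⊕ n) (m ⊕ n) R}
    {u : Matrix (m ⊕ n) m R} {v : Matrix (m ⊕ n) n R} (h : M * fromCols u v = 1) :
    M * u = fromRows 1 0 ∧ M * v = fromRows 0 1 := by
  rw [mul_fromCols, ← fromBlocks_one, ← fromCols_fromRows_eq_fromBlocks] at h
  exact fromCols_inj h

lemma det_fromCols_fromRows_one_zero (a : Matrix m n R) (b : Matrix n n R) :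
    (fromCols (fromRows 1 0) (fromRows a b)).det = b.det := by
  rw [fromCols_fromRows_eq_fromBlocks, det_fromBlocks_zero₂₁, det_one, one_mul]

lemma det_fromCols_fromRows_zero_one (c d : Matrix n n R) :
    (fromCols (fromRows 0 1) (fromRows c d)).det =
      Equiv.Perm.sign (Equiv.sumComm n n) * c.det := by
  have h := det_permute' (Equiv.sumComm n n) (fromBlocks 0 c 1 d)
  rw [show (fromBlocks 0 c 1 d).submatrix id (Equiv.sumComm n n) = fromBlocks c 0 d 1 from
    fromBlocks_submatrix_sum_swap_right _ _ _ _ _, det_fromBlocks_zero₁₂, det_one, mul_one] at h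
  rw [fromCols_fromRows_eq_fromBlocks, h, ← mul_assoc, ← Int.cast_mul, ← Units.val_mul,
    Int.units_mul_self, Units.val_one, Int.cast_one, one_mul]

end Blocks

lemma exists_normal_form_211_of_normalized {r : ℕ} (a b c d : Matrix (Fin r) (Fin r) ℂ)
    (hb : b.det ≠ 0) (hc : c.det ≠ 0) (hd : d.det ≠ 0) :
    ∃ (S : GL (Fin r ⊕ Fin r) ℂ) (h₀ k l : GL (Fin r) ℂ)
      (h₁ : Matrix (Fin r) (Fin r) ℂ) (x : GL (Fin r) ℂ),
      (S : Matrix (Fin r ⊕ Fin r) (Fin r ⊕ Fin r) ℂ) *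
          ofBlockCols r 4 ![fromRows 1 0, fromRows a b, fromRows 0 1, fromRows c d] *
          ofBlockMat r 4
            ![![(h₀ : Matrix (Fin r) (Fin r) ℂ), h₁, 0, 0],
              ![0, (h₀ : Matrix (Fin r) (Fin r) ℂ), 0, 0],
              ![0, 0, (k : Matrix (Fin r) (Fin r) ℂ), 0],
              ![0, 0, 0, (l : Matrix (Fin r) (Fin r) ℂ)]] =
        ofBlockCols r 4
          ![fromRows 1 0, fromRows 0 1, fromRows 0 1,
            fromRows 1 (-(x : Matrix (Fin r) (Fin r) ℂ))] := by
  set B := GeneralLinearGroup.mkOfDetNeZero b hb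
  set C := GeneralLinearGroup.mkOfDetNeZero c hc
  set D := GeneralLinearGroup.mkOfDetNeZero d hd
  have hS :
      (fromBlocks (1 : Matrix (Fin r) (Fin r) ℂ) 0 0 (B⁻¹ : GL (Fin r) ℂ).val).det ≠ 0 := by
    rw [det_fromBlocks_zero₂₁, det_one, one_mul]
    exact GeneralLinearGroup.det_ne_zero _
  refine ⟨GeneralLinearGroup.mkOfDetNeZero _ hS, 1, B, C⁻¹, -a, -(B⁻¹ * D * C⁻¹), ?_⟩
  rw [Matrix.mul_assoc, ofBlockCols_mul_ofBlockMat_211, mul_ofBlockCols]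
  congr 1
  ext1 j
  have hbb : b⁻¹ * b = 1 := nonsing_inv_mul b hb.isUnit
  have hcc : c * c⁻¹ = 1 := mul_nonsing_inv c hc.isUnit
  fin_cases j <;>
    simp [fromBlocks_mul_fromRows, fromRows_add_fromRows, B, C, D, Matrix.mul_assoc, hbb, hcc]

theorem normal_form_partition_211_second_general (r : ℕ)
    (z : Fin 4 → Matrix (Fin r ⊕ Fin r) (Fin r) ℂ)
    (h01 : (fromCols (z 0) (z 1)).det ≠ 0)
    (h02 : (fromCols (z 0) (z 2)).det ≠ 0)
    (h03 : (fromCols (z 0) (z 3)).det ≠ 0)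
    (h23 : (fromCols (z 2) (z 3)).det ≠ 0) :
    ∃ (g : GL (Fin r ⊕ Fin r) ℂ) (h₀ k l : GL (Fin r) ℂ)
      (h₁ : Matrix (Fin r) (Fin r) ℂ) (x : GL (Fin r) ℂ),
      (g : Matrix (Fin r ⊕ Fin r) (Fin r ⊕ Fin r) ℂ) * ofBlockCols r 4 z *
          ofBlockMat r 4
            ![![(h₀ : Matrix (Fin r) (Fin r) ℂ), h₁, 0, 0],
              ![0, (h₀ : Matrix (Fin r) (Fin r) ℂ), 0, 0],
              ![0, 0, (k : Matrix (Fin r) (Fin r) ℂ), 0],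
              ![0, 0, 0, (l : Matrix (Fin r) (Fin r) ℂ)]] =
        ofBlockCols r 4
          ![fromRows 1 0, fromRows 0 1, fromRows 0 1,
            fromRows 1 (-(x : Matrix (Fin r) (Fin r) ℂ))] := by
  set G := GeneralLinearGroup.mkOfDetNeZero _ h02
  set w := fun j => (G⁻¹ : GL (Fin r ⊕ Fin r) ℂ).val * z j
  obtain ⟨hw0, hw2⟩ : w 0 = fromRows 1 0 ∧ w 2 = fromRows 0 1 :=
    mul_eq_fromRows_of_mul_fromCols_eq_one G.inv_mul
  obtain ⟨a, b, hw1⟩ : ∃ a b, w 1 = fromRows a b := ⟨_, _, (fromRows_toRows _).symm⟩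
  obtain ⟨c, d, hw3⟩ : ∃ c d, w 3 = fromRows c d := ⟨_, _, (fromRows_toRows _).symm⟩
  have hdet {i j : Fin 4} (h : (fromCols (z i) (z j)).det ≠ 0) :
      (fromCols (w i) (w j)).det ≠ 0 := by
    rw [← mul_fromCols, det_mul]
    exact mul_ne_zero (GeneralLinearGroup.det_ne_zero _) h
  have hb := hdet h01
  rw [hw0, hw1, det_fromCols_fromRows_one_zero] at hb
  have hd := hdet h03
  rw [hw0, hw3, det_fromCols_fromRows_one_zero] at hd
  have hc := hdet h23
  rw [hw2, hw3, det_fromCols_fromRows_zero_one] at hc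
  obtain ⟨S, h₀, k, l, h₁, x, hS⟩ :=
    exists_normal_form_211_of_normalized a b c d hb (right_ne_zero_of_mul hc) hd
  refine ⟨S * G⁻¹, h₀, k, l, h₁, x, ?_⟩
  have hw : (G⁻¹ : GL (Fin r ⊕ Fin r) ℂ).val * ofBlockCols r 4 z =
      ofBlockCols r 4 ![w 0, w 1, w 2, w 3] := by
    rw [mul_ofBlockCols]
    congr 1
    ext1 j
    fin_cases j <;> rfl
  rwa [Units.val_mul, Matrix.mul_assoc S.val, hw, hw0, hw1, hw2, hw3]

/-- Normal form lemma (form `x₂`) for `(m, N) = (2r, 4r)`, partition `λ = (2,1,1)`: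
`z = (z₀⁽¹⁾, z₁⁽¹⁾, z₀⁽²⁾, z₀⁽³⁾)` with the stated nondegeneracy conditions can be
brought, by the action of `GL(2r, ℂ) × H_{(2,1,1)}`, to the normal form with block rows
`(1_r, 0, 0, 1_r)` and `(0, 1_r, 1_r, −x')` with `x' ∈ GL(r, ℂ)`. -/
theorem normal_form_partition_211_second (r : ℕ) (hr : 1 ≤ r)
    (z : Fin 4 → Matrix (Fin r ⊕ Fin r) (Fin r) ℂ)
    (h01 : (fromCols (z 0) (z 1)).det ≠ 0)
    (h02 : (fromCols (z 0) (z 2)).det ≠ 0)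
    (h03 : (fromCols (z 0) (z 3)).det ≠ 0)
    (h23 : (fromCols (z 2) (z 3)).det ≠ 0) :
    ∃ (g : GL (Fin r ⊕ Fin r) ℂ) (h₀ k l : GL (Fin r) ℂ)
      (h₁ : Matrix (Fin r) (Fin r) ℂ) (x : GL (Fin r) ℂ),
      (g : Matrix (Fin r ⊕ Fin r) (Fin r ⊕ Fin r) ℂ) * ofBlockCols r 4 z *
          ofBlockMat r 4
            ![![(h₀ : Matrix (Fin r) (Fin r) ℂ), h₁, 0, 0],
              ![0, (h₀ : Matrix (Fin r) (Fin r) ℂ), 0, 0],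
              ![0, 0, (k : Matrix (Fin r) (Fin r) ℂ), 0],
              ![0, 0, 0, (l : Matrix (Fin r) (Fin r) ℂ)]] =
        ofBlockCols r 4
          ![fromRows 1 0, fromRows 0 1, fromRows 0 1,
            fromRows 1 (-(x : Matrix (Fin r) (Fin r) ℂ))] :=
  normal_form_partition_211_second_general r z h01 h02 h03 h23
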